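/- arXiv:1604.06171 — 5 statements merged into one kernel-verified Lean document; each statement's English description precedes it below -/
import Mathlib

section
/- Let T ⊂ ℝ^d be a compact convex set with nonempty interior, λ ∈ (0,1), and let T' ⊆ T be a homothetic image of T with scaling factor λ (i.e., T' = {λ(x−x₀)+x₀ : x ∈ T} for some x₀). Then for every polynomial v of degree at most p on ℝ^d, ‖v‖_{L²(T)} ≤ C(λ,p+1)·‖v‖_{L²(T')}, where the constant depends only on λ, p, and d, and not on the shape of T. -/
/-!
For fixed `x`, the function `s ↦ v (x₀ + s • (x - x₀)) ^ 2` is a polynomial of degree at most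
`2p`, so Lagrange interpolation at the nodes `λ, λ², …, λ^(2p+1)` writes its value at `s = 1` as a
fixed linear combination of its values at the nodes. Integrating over `T`, the substitution
`y = x₀ + λᵏ • (x - x₀)` turns the `k`-th term into `λ^(-kd) ∫_{Tₖ} v²`, where `Tₖ` is the image of
`T` under the homothety of ratio `λᵏ`. Iterating `T' ⊆ T` gives `Tₖ ⊆ T'`, and since `v² ≥ 0`
each term is at most `λ^(-kd) ∫_{T'} v²`.
-/

open MeasureTheory Module Function Finset

namespace MvPolynomial

variable {σ R : Type*}

theorem eval_aeval_line [CommRing R] (q : MvPolynomial σ R) (a b : σ → R) (s : R) :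
    (aeval (fun i => Polynomial.C (b i) * Polynomial.X + Polynomial.C (a i)) q).eval s =
      eval (a + s • b) q := by
  induction q using MvPolynomial.induction_on with
  | C r => simp
  | add p q hp hq => simp [hp, hq]
  | mul_X p i hp =>
    simp only [map_mul, aeval_X, Polynomial.eval_mul, hp, Polynomial.eval_add, Polynomial.eval_C,
      Polynomial.eval_X, eval_X, Pi.add_apply, Pi.smul_apply, smul_eq_mul]
    ring

theorem eval_line_eq_sum_lagrange [Field R] {ι : Type*} [Fintype ι] [DecidableEq ι]
    {t : ι → R} (ht : Injective t) {q : MvPolynomial σ R} (hq : q.totalDegree < Fintype.card ι)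
    (a b : σ → R) (s : R) :
    eval (a + s • b) q = ∑ k, (Lagrange.basis univ t k).eval s * eval (a + t k • b) q := by
  rw [← eval_aeval_line]
  have hdeg : (aeval (fun i => Polynomial.C (b i) * Polynomial.X + Polynomial.C (a i)) q).degree <
      (Fintype.card ι : WithBot ℕ) := by
    refine Polynomial.degree_le_natDegree.trans_lt ?_
    have := aeval_natDegree_le q le_rfl _ fun i =>
      Polynomial.natDegree_linear_le (a := b i) (b := a i)
    exact_mod_cast (this.trans_eq (mul_one _)).trans_lt hq
  rw [Lagrange.eq_interpolate ht.injOn hdeg, Lagrange.interpolate_apply,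
    Polynomial.eval_finsetSum]
  refine sum_congr rfl fun k _ => ?_
  rw [Polynomial.eval_mul, Polynomial.eval_C, eval_aeval_line, mul_comm]

end MvPolynomial

theorem homothety_pow_image_subset {R E : Type*} [Ring R] [AddCommGroup E] [Module R E]
    {T : Set E} {x₀ : E} {lam : R} (h : (fun x => x₀ + lam • (x - x₀)) '' T ⊆ T) (k : ℕ) :
    (fun x => x₀ + lam ^ (k + 1) • (x - x₀)) '' T ⊆ (fun x => x₀ + lam • (x - x₀)) '' T := by
  have hcomp : ∀ a b : R, (fun x => x₀ + (a * b) • (x - x₀)) =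
      (fun x => x₀ + a • (x - x₀)) ∘ (fun x => x₀ + b • (x - x₀)) := by
    intro a b; ext x; simp [mul_smul]
  have hpow : ∀ k : ℕ, (fun x => x₀ + lam ^ k • (x - x₀)) '' T ⊆ T := by
    intro k
    induction k with
    | zero => simp
    | succ k ih => rw [pow_succ', hcomp, Set.image_comp]; exact (Set.image_mono ih).trans h
  rw [pow_succ', hcomp, Set.image_comp]
  exact Set.image_mono (hpow k)

section Homothety

variable {E F : Type*} [NormedAddCommGroup E] [NormedSpace ℝ E] [FiniteDimensional ℝ E]
  [MeasurableSpace E] [BorelSpace E] [NormedAddCommGroup F] [NormedSpace ℝ F]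

theorem setIntegral_image_homothety (μ : Measure E) [μ.IsAddHaarMeasure] (x₀ : E) {s : ℝ}
    (hs : 0 < s) {T : Set E} (hT : MeasurableSet T) (g : E → F) :
    ∫ y in (fun x => x₀ + s • (x - x₀)) '' T, g y ∂μ =
      s ^ finrank ℝ E • ∫ x in T, g (x₀ + s • (x - x₀)) ∂μ := by
  have hderiv : ∀ x ∈ T, HasFDerivWithinAt (fun x => x₀ + s • (x - x₀))
      (s • ContinuousLinearMap.id ℝ E) T x := fun x _ =>
    ((((hasFDerivAt_id x).sub_const x₀).const_smul s).const_add x₀).hasFDerivWithinAt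
  have hinj : Set.InjOn (fun x => x₀ + s • (x - x₀)) T := fun a _ b _ hab => by
    simpa [hs.ne'] using hab
  have hdet : (s • ContinuousLinearMap.id ℝ E).det = s ^ finrank ℝ E := by
    simp [ContinuousLinearMap.det, LinearMap.det_smul]
  rw [integral_image_eq_integral_abs_det_fderiv_smul μ hT hderiv hinj, hdet,
    abs_of_pos (pow_pos hs _), integral_smul]

theorem setIntegral_le_of_eq_sum_comp_homothety (μ : Measure E) [μ.IsAddHaarMeasure]
    {g : E → ℝ} (hg : Continuous g) (hg0 : ∀ x, 0 ≤ g x) {T : Set E} (hT : IsCompact T)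
    {x₀ : E} {lam : ℝ} (hlam : 0 < lam) (hsub : (fun x => x₀ + lam • (x - x₀)) '' T ⊆ T)
    {n : ℕ} (c : Fin n → ℝ)
    (hgc : ∀ x, g x = ∑ k, c k * g (x₀ + lam ^ (k + 1 : ℕ) • (x - x₀))) :
    ∫ x in T, g x ∂μ ≤ (∑ k, |c k| / lam ^ ((k + 1 : ℕ) * finrank ℝ E)) *
      ∫ x in (fun x => x₀ + lam • (x - x₀)) '' T, g x ∂μ := by
  have himage : ∀ s : ℝ, IsCompact ((fun x => x₀ + s • (x - x₀)) '' T) := fun s =>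
    hT.image (by fun_prop)
  set J := ∫ x in (fun x => x₀ + lam • (x - x₀)) '' T, g x ∂μ
  have hterm : ∀ k : Fin n, c k * ∫ x in T, g (x₀ + lam ^ (k + 1 : ℕ) • (x - x₀)) ∂μ ≤
      |c k| / lam ^ ((k + 1 : ℕ) * finrank ℝ E) * J := by
    intro k
    set t := lam ^ (k + 1 : ℕ)
    have ht : 0 < t := pow_pos hlam _
    have hI : ∫ x in T, g (x₀ + t • (x - x₀)) ∂μ =
        (∫ x in (fun x => x₀ + t • (x - x₀)) '' T, g x ∂μ) / t ^ finrank ℝ E := by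
      rw [setIntegral_image_homothety μ x₀ ht hT.measurableSet, smul_eq_mul,
        mul_div_cancel_left₀ _ (pow_pos ht _).ne']
    set I := ∫ x in (fun x => x₀ + t • (x - x₀)) '' T, g x ∂μ
    have hI0 : 0 ≤ I := setIntegral_nonneg (himage t).measurableSet fun x _ => hg0 x
    have hIJ : I ≤ J := setIntegral_mono_set
      ((hg.continuousOn).integrableOn_compact (himage lam)) (.of_forall hg0)
      (homothety_pow_image_subset hsub k).eventuallyLE
    calc c k * ∫ x in T, g (x₀ + t • (x - x₀)) ∂μ = c k * (I / t ^ finrank ℝ E) := by rw [hI]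
      _ ≤ |c k| * (J / t ^ finrank ℝ E) := by gcongr; exact le_abs_self _
      _ = |c k| / lam ^ ((k + 1 : ℕ) * finrank ℝ E) * J := by rw [pow_mul]; ring
  have hint : ∀ k ∈ univ,
      IntegrableOn (fun x => c k * g (x₀ + lam ^ (k + 1 : ℕ) • (x - x₀))) T μ :=
    fun k _ => (Continuous.continuousOn (by fun_prop)).integrableOn_compact hT
  calc ∫ x in T, g x ∂μ = ∫ x in T, ∑ k, c k * g (x₀ + lam ^ (k + 1 : ℕ) • (x - x₀)) ∂μ :=
        integral_congr_ae (.of_forall hgc)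
    _ = ∑ k, c k * ∫ x in T, g (x₀ + lam ^ (k + 1 : ℕ) • (x - x₀)) ∂μ := by
        rw [integral_finsetSum _ hint]
        simp_rw [integral_const_mul]
    _ ≤ _ := by rw [sum_mul]; exact sum_le_sum fun k _ => hterm k

end Homothety

noncomputable def homothetyConstant (lam : ℝ) (d p : ℕ) : ℝ :=
  ∑ k : Fin (2 * p + 1),
    |(Lagrange.basis univ (fun k : Fin (2 * p + 1) => lam ^ (k + 1 : ℕ)) k).eval 1| /
      lam ^ ((k + 1 : ℕ) * d)

theorem homothetyConstant_nonneg {lam : ℝ} (hlam : 0 < lam) (d p : ℕ) :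
    0 ≤ homothetyConstant lam d p :=
  sum_nonneg fun _ _ => by positivity

theorem setIntegral_eval_sq_le_homothetyConstant_mul {d p : ℕ} {lam : ℝ} (hlam0 : 0 < lam)
    (hlam1 : lam ≠ 1) {T : Set (EuclideanSpace ℝ (Fin d))} (hT : IsCompact T)
    {x₀ : EuclideanSpace ℝ (Fin d)} (hsub : (fun x => x₀ + lam • (x - x₀)) '' T ⊆ T)
    {v : MvPolynomial (Fin d) ℝ} (hv : v.totalDegree ≤ p) :
    ∫ x in T, MvPolynomial.eval (fun i => x i) v ^ 2 ≤ homothetyConstant lam d p *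
      ∫ x in (fun x => x₀ + lam • (x - x₀)) '' T, MvPolynomial.eval (fun i => x i) v ^ 2 := by
  set t : Fin (2 * p + 1) → ℝ := fun k => lam ^ (k + 1 : ℕ)
  have ht : Injective t :=
    (pow_right_injective₀ hlam0 hlam1).comp (Nat.succ_injective.comp Fin.val_injective)
  have hdeg : (v ^ 2).totalDegree < Fintype.card (Fin (2 * p + 1)) := by
    rw [Fintype.card_fin]
    have := MvPolynomial.totalDegree_pow v 2
    omega
  have hinterp : ∀ x : EuclideanSpace ℝ (Fin d), MvPolynomial.eval (fun i => x i) v ^ 2 =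
      ∑ k, (Lagrange.basis univ t k).eval 1 *
        MvPolynomial.eval (fun i => (x₀ + t k • (x - x₀)) i) v ^ 2 := by
    intro x
    have := MvPolynomial.eval_line_eq_sum_lagrange ht hdeg x₀.ofLp (x.ofLp - x₀.ofLp) 1
    rw [one_smul, add_sub_cancel] at this
    simpa only [← WithLp.ofLp_sub, ← WithLp.ofLp_smul, ← WithLp.ofLp_add, MvPolynomial.eval_pow]
      using this
  have hcont : Continuous fun x : EuclideanSpace ℝ (Fin d) =>
      MvPolynomial.eval (fun i => x i) v ^ 2 :=
    ((MvPolynomial.continuous_eval v).comp (PiLp.continuous_ofLp 2 _)).pow 2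
  have := setIntegral_le_of_eq_sum_comp_homothety volume hcont (fun x => sq_nonneg _) hT hlam0
    hsub _ hinterp
  rwa [finrank_euclideanSpace_fin] at this

theorem l2_norm_equivalence_homothety_general (d p : ℕ) (lam : ℝ)
    (hlam : lam ∈ Set.Ioo (0:ℝ) 1) :
    ∃ C > 0, ∀ (T : Set (EuclideanSpace ℝ (Fin d))) (x₀ : EuclideanSpace ℝ (Fin d)),
      IsCompact T → Convex ℝ T → (interior T).Nonempty →
      (fun x => x₀ + lam • (x - x₀)) '' T ⊆ T →
      ∀ v : MvPolynomial (Fin d) ℝ, v.totalDegree ≤ p →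
        Real.sqrt (∫ x in T, (MvPolynomial.eval (fun i => x i) v) ^ 2) ≤
          C * Real.sqrt (∫ x in (fun x => x₀ + lam • (x - x₀)) '' T,
            (MvPolynomial.eval (fun i => x i) v) ^ 2) := by
  obtain ⟨hlam0, hlam1⟩ := hlam
  set K := homothetyConstant lam d p
  have hK : 0 ≤ K := homothetyConstant_nonneg hlam0 d p
  refine ⟨√K + 1, by positivity, fun T x₀ hT _ _ hsub v hv => ?_⟩
  set J := ∫ x in (fun x => x₀ + lam • (x - x₀)) '' T, MvPolynomial.eval (fun i => x i) v ^ 2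
  calc √(∫ x in T, MvPolynomial.eval (fun i => x i) v ^ 2) ≤ √(K * J) :=
        Real.sqrt_le_sqrt (setIntegral_eval_sq_le_homothetyConstant_mul hlam0 hlam1.ne hT hsub hv)
    _ = √K * √J := Real.sqrt_mul hK J
    _ ≤ (√K + 1) * √J := by gcongr; linarith

/-- Lemma 2.2: if `T ⊂ ℝ^d` is a compact convex set with nonempty interior and `T'` is a
homothetic image of `T` with scaling factor `λ ∈ (0,1)` contained in `T`, then for every
polynomial `v` of total degree at most `p`,
`‖v‖_{L²(T)} ≤ C(λ,p,d) ‖v‖_{L²(T')}` with a constant independent of the shape of `T`. -/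
theorem l2_norm_equivalence_homothety (d p : ℕ) (hd : 1 ≤ d) (lam : ℝ)
    (hlam : lam ∈ Set.Ioo (0:ℝ) 1) :
    ∃ C > 0, ∀ (T : Set (EuclideanSpace ℝ (Fin d))) (x₀ : EuclideanSpace ℝ (Fin d)),
      IsCompact T → Convex ℝ T → (interior T).Nonempty →
      (fun x => x₀ + lam • (x - x₀)) '' T ⊆ T →
      ∀ v : MvPolynomial (Fin d) ℝ, v.totalDegree ≤ p →
        Real.sqrt (∫ x in T, (MvPolynomial.eval (fun i => x i) v) ^ 2) ≤
          C * Real.sqrt (∫ x in (fun x => x₀ + lam • (x - x₀)) '' T,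
            (MvPolynomial.eval (fun i => x i) v) ^ 2) :=
  l2_norm_equivalence_homothety_general d p lam hlam
end

section
/- For the one-dimensional case of the homothety lemma: if T ⊂ ℝ is a compact interval, λ ∈ (0,1), and T' = λ(T − x₀) + x₀ ⊆ T is a homothetic copy of T, then for every polynomial v of degree at most p, ‖v‖_{L²(T)} ≤ C(λ,p)·‖v‖_{L²(T')} with C depending only on λ and p. -/
/-!
Cut the image interval `T'` into `2p + 1` cells of equal length `c` and keep every other one.
On each of the `p + 1` kept cells `v²` takes a value at most `(1/c) ∫_{T'} v²`, which yields
`p + 1` nodes at mutual distance at least `c`. Lagrange interpolation at these nodes bounds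
`|v|` on `T` by `(p + 1) √(∫_{T'} v² / c) (|T| / c)^p`, and integrating over `T` gives the
`L²` bound with a constant depending only on `p` and `|T'| / |T| = λ`.
-/

open MeasureTheory Set Polynomial
theorem Lagrange.abs_eval_basis_le {ι : Type*} [DecidableEq ι] {s : Finset ι} {ξ : ι → ℝ}
    {i : ι} {x c L : ℝ} (hc : 0 < c) (hsep : ∀ j ∈ s, j ≠ i → c ≤ |ξ i - ξ j|)
    (hx : ∀ j ∈ s, |x - ξ j| ≤ L) :
    |(Lagrange.basis s ξ i).eval x| ≤ (L / c) ^ (s.erase i).card := by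
  rw [Lagrange.basis, eval_prod, Finset.abs_prod, ← Finset.prod_const]
  refine Finset.prod_le_prod (fun _ _ => abs_nonneg _) fun j hj => ?_
  obtain ⟨hji, hjs⟩ := Finset.mem_erase.mp hj
  simp only [Lagrange.basisDivisor, eval_mul, eval_C, eval_sub, eval_X, inv_mul_eq_div, abs_div]
  exact div_le_div₀ ((abs_nonneg _).trans (hx j hjs)) (hx j hjs) hc (hsep j hjs hji)

theorem abs_eval_le_of_separated_nodes {ι : Type*} [DecidableEq ι] {s : Finset ι}
    {ξ : ι → ℝ} {v : ℝ[X]} {x c L M : ℝ} (hc : 0 < c) (hdeg : v.degree < s.card)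
    (hsep : ∀ i ∈ s, ∀ j ∈ s, i ≠ j → c ≤ |ξ i - ξ j|)
    (hx : ∀ j ∈ s, |x - ξ j| ≤ L) (hM : ∀ i ∈ s, |v.eval (ξ i)| ≤ M) :
    |v.eval x| ≤ s.card * (M * (L / c) ^ (s.card - 1)) := by
  have hinj : InjOn ξ s := fun i hi j hj hij => by
    by_contra hne
    have := hsep i hi j hj hne
    rw [hij, sub_self, abs_zero] at this
    exact this.not_gt hc
  rw [Lagrange.eq_interpolate hinj hdeg, Lagrange.interpolate_apply, eval_finsetSum]
  refine (Finset.abs_sum_le_sum_abs _ _).trans ((Finset.sum_le_sum fun i hi => ?_).trans_eq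
    (by rw [Finset.sum_const, nsmul_eq_mul]))
  rw [eval_mul, eval_C, abs_mul, ← Finset.card_erase_of_mem hi]
  exact mul_le_mul (hM i hi)
    (Lagrange.abs_eval_basis_le hc (fun j hj hji => hsep i hi j hj hji.symm) hx)
    (abs_nonneg _) ((abs_nonneg _).trans (hM i hi))

theorem exists_mul_le_setIntegral_Icc {f : ℝ → ℝ} (hf : Continuous f) {u w : ℝ}
    (huw : u ≤ w) :
    ∃ ξ ∈ Icc u w, f ξ * (w - u) ≤ ∫ x in Icc u w, f x := by
  obtain ⟨ξ, hξ, hmin⟩ := isCompact_Icc.exists_isMinOn (nonempty_Icc.mpr huw) hf.continuousOn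
  refine ⟨ξ, hξ, ?_⟩
  have := setIntegral_ge_of_const_le_real measurableSet_Icc (measure_Icc_lt_top (μ := volume)).ne
    (fun x hx => hmin hx) hf.integrableOn_Icc
  rwa [Real.volume_real_Icc_of_le huw] at this

theorem exists_separated_nodes_mul_le_setIntegral {f : ℝ → ℝ} (hf : Continuous f)
    {a b c : ℝ} (hf0 : ∀ x ∈ Icc a b, 0 ≤ f x) (hc : 0 < c) {n : ℕ}
    (hcells : a + (2 * n + 1) * c ≤ b) :
    ∃ ξ : Fin (n + 1) → ℝ,
      (∀ i, ξ i ∈ Icc a b ∧ f (ξ i) * c ≤ ∫ x in Icc a b, f x) ∧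
      Pairwise fun i j => c ≤ |ξ i - ξ j| := by
  have hcell : ∀ i : Fin (n + 1), Icc (a + 2 * i * c) (a + 2 * i * c + c) ⊆ Icc a b := by
    intro i
    have hi : (i : ℝ) ≤ n := by exact_mod_cast Nat.lt_succ_iff.mp i.isLt
    exact Icc_subset_Icc (by nlinarith) (by nlinarith)
  choose ξ hξ hξf using fun i : Fin (n + 1) =>
    exists_mul_le_setIntegral_Icc hf (le_add_of_nonneg_right hc.le) (u := a + 2 * i * c)
  refine ⟨ξ, fun i => ⟨hcell i (hξ i), ?_⟩, ?_⟩
  · have hξi := hξf i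
    rw [add_sub_cancel_left] at hξi
    refine hξi.trans (setIntegral_mono_set hf.integrableOn_Icc ?_ ?_)
    · exact ae_restrict_of_forall_mem measurableSet_Icc hf0
    · exact Filter.Eventually.of_forall (hcell i)
  · have hsep : ∀ i j : Fin (n + 1), i < j → c ≤ ξ j - ξ i := by
      intro i j hij
      have hij' : (i : ℝ) + 1 ≤ j := by exact_mod_cast hij
      nlinarith [(hξ i).2, (hξ j).1]
    intro i j hij
    rcases hij.lt_or_gt with h | h
    · exact (hsep i j h).trans (neg_sub (ξ i) (ξ j) ▸ neg_le_abs _)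
    · exact (hsep j i h).trans (le_abs_self _)

theorem setIntegral_Icc_sq_eval_le {p : ℕ} {v : ℝ[X]} (hv : v.natDegree ≤ p) {a b a' b' : ℝ}
    (hab' : a' < b') (hsub : Icc a' b' ⊆ Icc a b) :
    ∫ x in Icc a b, v.eval x ^ 2 ≤
      (p + 1) ^ 2 * ((2 * p + 1) * (b - a) / (b' - a')) ^ (2 * p + 1) *
        ∫ x in Icc a' b', v.eval x ^ 2 := by
  set I' := ∫ x in Icc a' b', v.eval x ^ 2
  set c := (b' - a') / (2 * p + 1) with hc_def
  have hc : 0 < c := div_pos (sub_pos.mpr hab') (by positivity)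
  have hI' : 0 ≤ I' := setIntegral_nonneg measurableSet_Icc fun _ _ => sq_nonneg _
  have hab : a ≤ b := by
    have ha' := hsub (left_mem_Icc.mpr hab'.le)
    exact ha'.1.trans ha'.2
  obtain ⟨ξ, hξ, hsep⟩ := exists_separated_nodes_mul_le_setIntegral
    (f := fun x => v.eval x ^ 2) (a := a') (b := b') (n := p) (v.continuous.pow 2)
    (fun _ _ => sq_nonneg _) hc (by rw [hc_def, mul_div_cancel₀ _ (by positivity)]; linarith)
  have hnode : ∀ i, |v.eval (ξ i)| ≤ √(I' / c) := fun i =>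
    Real.abs_le_sqrt ((le_div_iff₀ hc).mpr (hξ i).2)
  have hdeg : v.degree < (Finset.univ : Finset (Fin (p + 1))).card := by
    rw [Finset.card_univ, Fintype.card_fin]
    exact (degree_le_of_natDegree_le hv).trans_lt (WithBot.coe_lt_coe.mpr p.lt_succ_self)
  have hpt : ∀ x ∈ Icc a b,
      ‖v.eval x ^ 2‖ ≤ ((p + 1) * (√(I' / c) * ((b - a) / c) ^ p)) ^ 2 := by
    intro x hx
    have hnear : ∀ j, |x - ξ j| ≤ b - a := fun j => abs_sub_le_iff.mpr
      ⟨by linarith [hx.2, (hsub (hξ j).1).1], by linarith [hx.1, (hsub (hξ j).1).2]⟩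
    have := abs_eval_le_of_separated_nodes hc hdeg (fun i _ j _ hij => hsep hij)
      (fun j _ => hnear j) (fun i _ => hnode i)
    rw [Finset.card_univ, Fintype.card_fin] at this
    rw [Real.norm_eq_abs, abs_pow]
    exact pow_le_pow_left₀ (abs_nonneg _) (by simpa using this) 2
  have hratio : (b - a) / c = (2 * p + 1) * (b - a) / (b' - a') := by
    rw [hc_def]; field_simp
  calc ∫ x in Icc a b, v.eval x ^ 2
      ≤ ((p + 1) * (√(I' / c) * ((b - a) / c) ^ p)) ^ 2 * (b - a) := by
        have := norm_setIntegral_le_of_norm_le_const (measure_Icc_lt_top (μ := volume)) hpt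
        rw [Real.volume_real_Icc_of_le hab] at this
        exact (Real.le_norm_self _).trans this
    _ = (p + 1) ^ 2 * ((b - a) / c) ^ (2 * p + 1) * I' := by
        rw [mul_pow, mul_pow, Real.sq_sqrt (div_nonneg hI' hc.le)]
        ring
    _ = _ := by rw [hratio]

theorem image_homothety_Icc {K : Type*} [Field K] [LinearOrder K] [IsStrictOrderedRing K]
    {r : K} (hr : 0 < r) (x₀ a b : K) :
    (fun x => r * (x - x₀) + x₀) '' Icc a b =
      Icc (r * (a - x₀) + x₀) (r * (b - x₀) + x₀) := by
  have hfun : (fun x => r * (x - x₀) + x₀) = (r * · + (x₀ - r * x₀)) := by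
    funext x; ring
  rw [hfun, image_affine_Icc' hr]
  congr 1 <;> ring

/-- One-dimensional case of the homothety lemma: if `T = [a,b]` is a nondegenerate compact
interval, `λ ∈ (0,1)`, `x₀ ∈ T`, and `T' = λ(T − x₀) + x₀ ⊆ T` is the homothetic copy
of `T`, then for every polynomial `v` of degree at most `p`,
`‖v‖_{L²(T)} ≤ C(λ,p) ‖v‖_{L²(T')}`. -/
theorem l2_norm_equivalence_homothety_dim_one (p : ℕ) (lam : ℝ)
    (hlam : lam ∈ Set.Ioo (0:ℝ) 1) :
    ∃ C > 0, ∀ (a b x₀ : ℝ), a < b → x₀ ∈ Set.Icc a b →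
      (fun x => lam * (x - x₀) + x₀) '' Set.Icc a b ⊆ Set.Icc a b →
      ∀ v : Polynomial ℝ, v.natDegree ≤ p →
        Real.sqrt (∫ x in Set.Icc a b, (v.eval x) ^ 2) ≤
          C * Real.sqrt (∫ x in (fun x => lam * (x - x₀) + x₀) '' Set.Icc a b,
            (v.eval x) ^ 2) := by
  obtain ⟨hlam0, -⟩ := hlam
  set K : ℝ := (p + 1) ^ 2 * ((2 * p + 1) / lam) ^ (2 * p + 1)
  refine ⟨√K, Real.sqrt_pos.mpr (by positivity), fun a b x₀ hab _ hsub v hv => ?_⟩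
  rw [image_homothety_Icc hlam0] at hsub ⊢
  have hratio : (2 * p + 1) * (b - a) / (lam * (b - x₀) + x₀ - (lam * (a - x₀) + x₀)) =
      (2 * p + 1) / lam := by
    rw [show lam * (b - x₀) + x₀ - (lam * (a - x₀) + x₀) = lam * (b - a) by ring,
      mul_div_mul_right _ _ (sub_pos.mpr hab).ne']
  have hlt : lam * (a - x₀) + x₀ < lam * (b - x₀) + x₀ := by nlinarith
  calc √(∫ x in Icc a b, v.eval x ^ 2)
      ≤ √(K * ∫ x in Icc (lam * (a - x₀) + x₀) (lam * (b - x₀) + x₀), v.eval x ^ 2) :=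
        Real.sqrt_le_sqrt (by simpa only [hratio] using setIntegral_Icc_sq_eval_le hv hlt hsub)
    _ = √K *
        √(∫ x in Icc (lam * (a - x₀) + x₀) (lam * (b - x₀) + x₀), v.eval x ^ 2) :=
        Real.sqrt_mul (by positivity) _
end

section
/- For every d ≥ 1 there exists a constant λ_d ∈ (0,1) such that every compact convex body T ⊂ ℝ^d is sandwiched between a homothetic pair of rectangular boxes: there exist boxes B₁ ⊇ T ⊇ B₂ with B₂ a homothetic image of B₁ with scaling factor at least λ_d. -/
/-!
Induct on the dimension. Let `p, q` be a diametral pair of `T` and `v = q - p`. Then `T` lies in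
the slab `0 ≤ ⟪v, x - p⟫ ≤ ‖v‖²`, and by induction its orthogonal projection `T'` onto `vᗮ` lies
between a box `B'` and a translate of `λ' • B'`. The outer box is `B'` times the slab. For the
inner box, lift each point of the small box to some `x ∈ T` and average it, with weights `1/3`
and `2/3`, with the segment `[p, q]`: whatever the height of `x`, the averages fill the middle
third of the slab above that point. This gives the ratio `λ' / 3`, hence `λ_d = 3⁻ᵈ`.
-/

open MeasureTheory

/-- A box (rectangular parallelepiped) in `ℝ^d`: the image of the unit cube under
`t ↦ c + ∑ i, t i • w i` for `d` mutually orthogonal nonzero vectors `w i`. -/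
def IsBox {d : ℕ} (B : Set (EuclideanSpace ℝ (Fin d))) : Prop :=
  ∃ (c : EuclideanSpace ℝ (Fin d)) (w : Fin d → EuclideanSpace ℝ (Fin d)),
    (∀ i, w i ≠ 0) ∧ (∀ i j, i ≠ j → (inner ℝ (w i) (w j) : ℝ) = 0) ∧
    B = {x | ∃ t : Fin d → ℝ, (∀ i, t i ∈ Set.Icc (0:ℝ) 1) ∧ x = c + ∑ i, t i • w i}

open Set Pointwise RealInnerProductSpace Module

section Affine

variable {V : Type*} [AddCommGroup V] [Module ℝ V]

theorem parallelepiped_fin_cons {k : ℕ} (v : V) (w : Fin k → V) :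
    parallelepiped (Fin.cons v w : Fin (k + 1) → V) = segment ℝ 0 v + parallelepiped w := by
  simp only [parallelepiped_eq_sum_segment, Fin.sum_univ_succ, Fin.cons_zero, Fin.cons_succ]

theorem parallelepiped_smul {ι : Type*} [Fintype ι] (c : ℝ) (w : ι → V) :
    parallelepiped (c • w) = c • parallelepiped w := by
  rw [← image_smul]
  exact (image_parallelepiped (c • LinearMap.id) w).symm

theorem image_homothety_vadd_parallelepiped {ι : Type*} [Fintype ι] (x₀ c : V) (r : ℝ)
    (w : ι → V) :
    (fun x => x₀ + r • (x - x₀)) '' (c +ᵥ parallelepiped w) =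
      (x₀ + r • (c - x₀)) +ᵥ parallelepiped (r • w) := by
  rw [← image_vadd, image_image, parallelepiped_smul, ← image_smul, ← image_vadd, image_image]
  refine image_congr fun y _ => ?_
  simp only [vadd_eq_add]
  module

theorem Convex.smul_add_smul_add_smul_mem {T : Set V} (hT : Convex ℝ T) {p v x : V}
    {s μ τ : ℝ} (hp : p ∈ T) (hq : p + v ∈ T) (hx : x + s • v ∈ T) (hs : s ∈ Icc 0 1)
    (hμ : 0 ≤ μ) (hτ : τ ∈ Icc μ (1 - μ)) : μ • x + (1 - μ) • p + τ • v ∈ T := by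
  obtain ⟨hτ₀, hτ₁⟩ := hτ
  have hμ₁ : 0 < 1 - μ := by linarith
  have hθ : (τ - μ * s) / (1 - μ) ∈ Icc (0 : ℝ) 1 := by
    rw [Set.mem_Icc, div_le_one hμ₁]
    exact ⟨div_nonneg (by nlinarith [hs.2]) hμ₁.le, by nlinarith [hs.1]⟩
  have hmix := hT hx (hT.add_smul_mem hp hq hθ) hμ hμ₁.le (by ring)
  convert hmix using 1
  match_scalars <;> field_simp; ring

variable {K : Type*} [AddCommGroup K] [Module ℝ K] {ι : K →ₗ[ℝ] V} {P : V → K} {f : V → ℝ}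
  {v p : V} {T : Set V} {k : ℕ} {w : Fin k → K}

theorem subset_vadd_parallelepiped_fin_cons (hdec : ∀ x, ι (P x) + f x • v = x)
    (hslab : ∀ x ∈ T, f x - f p ∈ Icc 0 1) {c : K} (hout : P '' T ⊆ c +ᵥ parallelepiped w) :
    T ⊆ (ι c + f p • v) +ᵥ parallelepiped (Fin.cons v (ι ∘ w) : Fin (k + 1) → V) := by
  intro x hx
  obtain ⟨y, hy, hPx⟩ := mem_vadd_set.mp (hout (mem_image_of_mem P hx))
  rw [vadd_eq_add] at hPx
  rw [parallelepiped_fin_cons, ← image_parallelepiped, segment_eq_image']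
  refine mem_vadd_set.mpr ⟨(f x - f p) • v + ι y,
    add_mem_add ⟨f x - f p, hslab x hx, by simp⟩ ⟨y, hy, rfl⟩, ?_⟩
  have hx' : ι c + ι y + f x • v = x := by rw [← map_add, hPx, hdec]
  rw [vadd_eq_add]
  linear_combination (norm := module) hx'

theorem exists_vadd_parallelepiped_fin_cons_subset (hdec : ∀ x, ι (P x) + f x • v = x)
    (hT : Convex ℝ T) (hp : p ∈ T) (hq : p + v ∈ T) (hslab : ∀ x ∈ T, f x - f p ∈ Icc 0 1)
    {lam : ℝ} (hlam : lam ∈ Icc 0 1) {a : K} (hin : a +ᵥ parallelepiped (lam • w) ⊆ P '' T) :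
    ∃ b : V, b +ᵥ parallelepiped ((lam / 3) • (Fin.cons v (ι ∘ w) : Fin (k + 1) → V)) ⊆ T := by
  -- centre the `v`-edge, of length `λ / 3`, in the height range `[1/3, 2/3]` supplied by
  -- `Convex.smul_add_smul_add_smul_mem`
  refine ⟨(1 / 3 : ℝ) • (ι a + f p • v) + (2 / 3 : ℝ) • p + ((1 - lam / 3) / 2) • v, ?_⟩
  rw [vadd_set_subset_iff]
  intro _ hz
  rw [parallelepiped_smul] at hz
  obtain ⟨z, hz, rfl⟩ := hz
  rw [parallelepiped_fin_cons, ← image_parallelepiped, segment_eq_image'] at hz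
  obtain ⟨_, ⟨s, hs, rfl⟩, _, ⟨y, hy, rfl⟩, rfl⟩ := hz
  have hy' : lam • y ∈ parallelepiped (lam • w) := by
    rw [parallelepiped_smul]
    exact smul_mem_smul_set hy
  obtain ⟨x, hx, hPx⟩ := hin (vadd_mem_vadd_set hy')
  have hbase : ι (a + lam • y) + f p • v + (f x - f p) • v ∈ T := by
    rw [vadd_eq_add] at hPx
    convert hx using 1
    linear_combination (norm := module) congrArg ι hPx.symm + hdec x
  have hτ : (1 - lam / 3) / 2 + lam / 3 * s ∈ Icc (1 / 3 : ℝ) (1 - 1 / 3) := by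
    constructor <;> nlinarith [hlam.1, hlam.2, hs.1, hs.2]
  convert hT.smul_add_smul_add_smul_mem hp hq hbase (hslab x hx) (by norm_num) hτ using 1
  simp only [vadd_eq_add, map_add, map_smul, zero_add, sub_zero]
  module

end Affine

theorem IsCompact.exists_forall_dist_le_dist {X : Type*} [PseudoMetricSpace X] {T : Set X}
    (hT : IsCompact T) (hne : T.Nonempty) :
    ∃ p ∈ T, ∃ q ∈ T, ∀ x ∈ T, ∀ y ∈ T, dist x y ≤ dist p q := by
  obtain ⟨⟨p, q⟩, ⟨hp, hq⟩, hmax⟩ :=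
    (hT.prod hT).exists_isMaxOn (hne.prod hne) continuous_dist.continuousOn
  exact ⟨p, hp, q, hq, fun x hx y hy => hmax (mk_mem_prod hx hy)⟩

section InnerProduct

variable {E : Type*} [NormedAddCommGroup E] [InnerProductSpace ℝ E]

theorem inner_sub_nonneg_of_dist_add_le {p v x : E} (h : dist x (p + v) ≤ ‖v‖) :
    0 ≤ ⟪v, x - p⟫ := by
  have hsq : ‖(x - p) - v‖ ^ 2 ≤ ‖v‖ ^ 2 := by
    rw [sub_sub, ← dist_eq_norm]
    gcongr
  rw [norm_sub_sq_real, real_inner_comm] at hsq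
  nlinarith [sq_nonneg ‖x - p‖]

theorem inner_sub_mem_Icc_of_forall_dist_le {T : Set E} {p v x : E} (hp : p ∈ T)
    (hq : p + v ∈ T) (hdiam : ∀ x ∈ T, ∀ y ∈ T, dist x y ≤ ‖v‖) (hx : x ∈ T) :
    ⟪v, x - p⟫ ∈ Icc 0 (‖v‖ ^ 2) := by
  refine ⟨inner_sub_nonneg_of_dist_add_le (hdiam x hx _ hq), ?_⟩
  have h := inner_sub_nonneg_of_dist_add_le (p := p + v) (v := -v) (x := x)
    (by simpa using hdiam x hx p hp)
  rw [inner_neg_left, sub_add_eq_sub_sub, inner_sub_right, real_inner_self_eq_norm_sq] at h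
  linarith

theorem pairwise_inner_fin_cons_eq_zero {k : ℕ} {v : E} {w : Fin k → E}
    (hv : ∀ i, ⟪v, w i⟫ = 0) (hw : Pairwise fun i j => ⟪w i, w j⟫ = 0) :
    Pairwise fun i j =>
      ⟪(Fin.cons v w : Fin (k + 1) → E) i, (Fin.cons v w : Fin (k + 1) → E) j⟫ = 0 := by
  intro i j hij
  cases i using Fin.cases <;> cases j using Fin.cases
  · exact absurd rfl hij
  · simp [hv]
  · simp [real_inner_comm, hv]
  · exact hw (fun h => hij (congrArg Fin.succ h))

variable (E) in
def HasBoxSandwich (k : ℕ) (lam : ℝ) (T : Set E) : Prop :=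
  ∃ (w : Fin k → E) (c a : E), (∀ i, w i ≠ 0) ∧ Pairwise (fun i j => ⟪w i, w j⟫ = 0) ∧
    T ⊆ c +ᵥ parallelepiped w ∧ a +ᵥ parallelepiped (lam • w) ⊆ T

theorem HasBoxSandwich.succ_of_forall_dist_le {T : Set E} {p v : E} {k : ℕ} {lam : ℝ}
    (hT : Convex ℝ T) (hp : p ∈ T) (hq : p + v ∈ T) (hv : v ≠ 0)
    (hdiam : ∀ x ∈ T, ∀ y ∈ T, dist x y ≤ ‖v‖) (hlam : lam ∈ Icc 0 1)
    (h : HasBoxSandwich (ℝ ∙ v)ᗮ k lam ((ℝ ∙ v)ᗮ.orthogonalProjectionOnto '' T)) :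
    HasBoxSandwich E (k + 1) (lam / 3) T := by
  obtain ⟨w, c, a, hw, hw_orth, hout, hin⟩ := h
  have hdec : ∀ x, ((ℝ ∙ v)ᗮ.orthogonalProjectionOnto x : E) + (⟪v, x⟫ / ‖v‖ ^ 2) • v = x := by
    intro x
    have h := (ℝ ∙ v).starProjection_add_starProjection_orthogonal x
    rwa [Submodule.starProjection_singleton, Submodule.starProjection_apply, add_comm] at h
  have hslab : ∀ x ∈ T, ⟪v, x⟫ / ‖v‖ ^ 2 - ⟪v, p⟫ / ‖v‖ ^ 2 ∈ Icc 0 1 := by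
    intro x hx
    have hvpos : 0 < ‖v‖ ^ 2 := by positivity
    obtain ⟨h0, h1⟩ := inner_sub_mem_Icc_of_forall_dist_le hp hq hdiam hx
    rw [inner_sub_right] at h0 h1
    rw [← sub_div]
    exact ⟨div_nonneg (by linarith) hvpos.le, (div_le_one hvpos).mpr (by linarith)⟩
  obtain ⟨b, hb⟩ := exists_vadd_parallelepiped_fin_cons_subset (ι := (ℝ ∙ v)ᗮ.subtype)
    hdec hT hp hq hslab hlam hin
  refine ⟨_, _, b, ?_, ?_,
    subset_vadd_parallelepiped_fin_cons (ι := (ℝ ∙ v)ᗮ.subtype) hdec hslab hout, hb⟩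
  · intro i
    cases i using Fin.cases
    · exact hv
    · simpa using hw _
  · exact pairwise_inner_fin_cons_eq_zero
      (fun i => Submodule.mem_orthogonal_singleton_iff_inner_right.mp (w i).2) hw_orth

theorem hasBoxSandwich_of_finrank_eq [FiniteDimensional ℝ E] {k : ℕ} (hk : finrank ℝ E = k)
    {T : Set E} (hTc : IsCompact T) (hTconv : Convex ℝ T) (hTint : (interior T).Nonempty) :
    HasBoxSandwich E k ((1 / 3) ^ k) T := by
  induction k generalizing E with
  | zero =>
    have : Subsingleton E := Module.finrank_zero_iff.mp hk
    obtain ⟨x, hx⟩ := hTint.mono interior_subset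
    refine ⟨Fin.elim0, x, x, fun i => i.elim0, fun i => i.elim0, fun y _ => ?_, fun y _ => ?_⟩
    · exact mem_vadd_set.mpr ⟨0, by simp [mem_parallelepiped_iff], Subsingleton.elim _ _⟩
    · rwa [Subsingleton.elim y x]
  | succ k ih =>
    have : Fact (finrank ℝ E = k + 1) := ⟨hk⟩
    have : Nontrivial E := Module.nontrivial_of_finrank_eq_succ hk
    obtain ⟨p, hp, q, hq, hdiam⟩ := hTc.exists_forall_dist_le_dist (hTint.mono interior_subset)
    have hv : q - p ≠ 0 := by
      intro h
      have hT : T ⊆ {p} := fun x hx => by simpa [sub_eq_zero.mp h] using hdiam x hx p hp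
      simpa [interior_singleton] using hTint.mono (interior_mono hT)
    set P := (ℝ ∙ (q - p))ᗮ.orthogonalProjectionOnto
    have hP : IsOpenMap P := P.toLinearMap.isOpenMap_of_finiteDimensional fun y =>
      ⟨y, Submodule.orthogonalProjectionOnto_mem_subspace_eq_self y⟩
    have hproj := ih (Submodule.finrank_orthogonal_span_singleton hv) (hTc.image P.continuous)
      (hTconv.linear_image P.toLinearMap) ((hTint.image P).mono (hP.image_interior_subset T))
    rw [pow_succ, mul_one_div]
    exact hproj.succ_of_forall_dist_le hTconv hp (by rwa [add_sub_cancel]) hv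
      (by rwa [← dist_eq_norm, dist_comm q])
      ⟨by positivity, pow_le_one₀ (by norm_num) (by norm_num)⟩

end InnerProduct

theorem isBox_vadd_parallelepiped {d : ℕ} (c : EuclideanSpace ℝ (Fin d))
    {w : Fin d → EuclideanSpace ℝ (Fin d)} (hw : ∀ i, w i ≠ 0)
    (horth : Pairwise fun i j => ⟪w i, w j⟫ = 0) : IsBox (c +ᵥ parallelepiped w) := by
  refine ⟨c, w, hw, fun i j hij => horth hij, ?_⟩
  ext x
  simp [mem_vadd_set, mem_parallelepiped_iff, Pi.le_def, forall_and, eq_comm]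

theorem HasBoxSandwich.exists_isBox_homothety {d : ℕ} {lam : ℝ} (hlam : lam ∈ Ioo 0 1)
    {T : Set (EuclideanSpace ℝ (Fin d))} (h : HasBoxSandwich _ d lam T) :
    ∃ B₁ B₂ : Set (EuclideanSpace ℝ (Fin d)), IsBox B₁ ∧ IsBox B₂ ∧ T ⊆ B₁ ∧ B₂ ⊆ T ∧
      ∃ x₀, B₂ = (fun x => x₀ + lam • (x - x₀)) '' B₁ := by
  obtain ⟨w, c, a, hw, horth, hout, hin⟩ := h
  have hne : 1 - lam ≠ 0 := (sub_pos.mpr hlam.2).ne'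
  refine ⟨_, _, isBox_vadd_parallelepiped c hw horth,
    isBox_vadd_parallelepiped a (fun i => smul_ne_zero hlam.1.ne' (hw i))
      (fun i j hij => by simp [real_inner_smul_left, real_inner_smul_right, horth hij]),
    hout, hin, (1 - lam)⁻¹ • (a - lam • c), ?_⟩
  rw [image_homothety_vadd_parallelepiped]
  congr 1
  match_scalars <;> field_simp <;> ring

/-- Every convex body in `ℝ^d` is sandwiched between a homothetic pair of boxes
`B₁ ⊇ T ⊇ B₂` with scaling factor bounded below by a constant `λ_d ∈ (0,1)`
depending only on the dimension. -/
theorem convex_body_sandwiched_between_homothetic_boxes (d : ℕ) (hd : 1 ≤ d) :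
    ∃ lam_d ∈ Set.Ioo (0:ℝ) 1, ∀ T : Set (EuclideanSpace ℝ (Fin d)),
      IsCompact T → Convex ℝ T → (interior T).Nonempty →
      ∃ (B₁ B₂ : Set (EuclideanSpace ℝ (Fin d))), IsBox B₁ ∧ IsBox B₂ ∧
        T ⊆ B₁ ∧ B₂ ⊆ T ∧
        ∃ (x₀ : EuclideanSpace ℝ (Fin d)) (lam : ℝ), lam_d ≤ lam ∧ lam ≤ 1 ∧
          B₂ = (fun x => x₀ + lam • (x - x₀)) '' B₁ := by
  have hlam : (1 / 3 : ℝ) ^ d ∈ Ioo 0 1 :=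
    ⟨by positivity, pow_lt_one₀ (by norm_num) (by norm_num) (by omega)⟩
  refine ⟨_, hlam, fun T hTc hTconv hTint => ?_⟩
  have hT := hasBoxSandwich_of_finrank_eq finrank_euclideanSpace_fin hTc hTconv hTint
  obtain ⟨B₁, B₂, hB₁, hB₂, hout, hin, x₀, hhom⟩ := hT.exists_isBox_homothety hlam
  exact ⟨B₁, B₂, hB₁, hB₂, hout, hin, x₀, _, le_rfl, hlam.2.le, hhom⟩
end

section
/- For every polynomial w of degree at most p on [0,1], the derivative satisfies ‖w'‖_{L²([0,1])} ≤ C·p²·‖w‖_{L²([0,1])} for an absolute constant C independent of p and w. -/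
/-!
Expand `w` in the shifted Legendre polynomials `Pₙ`, which are orthogonal on `[0,1]` by
Rodrigues' formula and repeated integration by parts. Integrating `(x Pₙ²)'` (note that
`x Pₙ' - n Pₙ` has degree `< n`) gives `‖Pₙ‖² = 1/(2n+1)`, and integrating `(Pₙ Pₙ')'` gives
`‖Pₙ'‖² = Pₙ(1) Pₙ'(1) - Pₙ(0) Pₙ'(0) = 2n(n+1)`. For `w = ∑ cₙ Pₙ`, Cauchy–Schwarz at each point
gives `w'(x)² ≤ (∑ cₙ²/(2n+1)) (∑ (2n+1) Pₙ'(x)²)`; integrating,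
`‖w'‖² ≤ ‖w‖² ∑_{n ≤ p} 2n(n+1)(2n+1) = p(p+1)²(p+2) ‖w‖² ≤ 16 p⁴ ‖w‖²`.
-/

open Polynomial Finset intervalIntegral

lemma Polynomial.isRoot_iterate_derivative_of_pow_dvd {R : Type*} [CommRing R] {f : R[X]}
    {a : R} {n k : ℕ} (h : (X - C a) ^ n ∣ f) (hk : k < n) : (derivative^[k] f).IsRoot a :=
  dvd_iff_isRoot.mp <| (dvd_pow_self _ (Nat.sub_ne_zero_of_lt hk)).trans
    (pow_sub_dvd_iterate_derivative_of_pow_dvd k h)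

lemma Polynomial.degree_X_mul_derivative_sub_natCast_mul_lt {R : Type*} [CommRing R]
    {f : R[X]} {n : ℕ} (hf : f.natDegree ≤ n) :
    (X * derivative f - (n : R[X]) * f).degree < (n : WithBot ℕ) := by
  rw [degree_lt_iff_coeff_zero]
  intro m hm
  rcases m with _ | k
  · simp [show n = 0 by omega]
  · rw [coeff_sub, coeff_X_mul, coeff_derivative, ← C_eq_natCast, coeff_C_mul]
    rcases (show n ≤ k + 1 by omega).eq_or_lt with rfl | hlt
    · push_cast; ring
    · simp [coeff_eq_zero_of_natDegree_lt (hf.trans_lt hlt)]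

lemma Polynomial.Sequence.exists_eq_sum_smul {K : Type*} [Field K] (S : Sequence K) {p : ℕ}
    {w : K[X]} (hw : w.natDegree ≤ p) : ∃ c : ℕ → K, ∑ n ∈ range (p + 1), c n • S n = w := by
  have hmem : w ∈ Submodule.span K (S '' ↑(range (p + 1))) := by
    rw [coe_range, S.span_degreeLT fun i _ => (leadingCoeff_ne_zero.mpr (S.ne_zero i)).isUnit,
      mem_degreeLT]
    exact degree_le_natDegree.trans_lt (by exact_mod_cast Nat.lt_succ_of_le hw)
  exact (Submodule.mem_span_image_finset_iff_exists_fun' K).mp hmem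

noncomputable def polyIntegral (a b : ℝ) : ℝ[X] →ₗ[ℝ] ℝ where
  toFun f := ∫ x in a..b, f.eval x
  map_add' f g := by
    simp only [eval_add]
    exact integral_add (f.continuous.intervalIntegrable a b) (g.continuous.intervalIntegrable a b)
  map_smul' c f := by simp [intervalIntegral.integral_const_mul]

lemma polyIntegral_apply (a b : ℝ) (f : ℝ[X]) :
    polyIntegral a b f = ∫ x in a..b, f.eval x := rfl

lemma polyIntegral_derivative (a b : ℝ) (f : ℝ[X]) :
    polyIntegral a b (derivative f) = f.eval b - f.eval a :=
  integral_eq_sub_of_hasDerivAt (fun x _ => f.hasDerivAt x)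
    (f.derivative.continuous.intervalIntegrable a b)

lemma polyIntegral_mono {a b : ℝ} (hab : a ≤ b) {f g : ℝ[X]}
    (h : ∀ x ∈ Set.Icc a b, f.eval x ≤ g.eval x) :
    polyIntegral a b f ≤ polyIntegral a b g :=
  integral_mono_on hab (f.continuous.intervalIntegrable a b) (g.continuous.intervalIntegrable a b) h

lemma polyIntegral_derivative_mul {a b : ℝ} {f : ℝ[X]} (ha : f.IsRoot a) (hb : f.IsRoot b)
    (g : ℝ[X]) :
    polyIntegral a b (derivative f * g) = -polyIntegral a b (f * derivative g) := by
  have h := polyIntegral_derivative a b (f * g)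
  rw [derivative_mul, map_add, eval_mul, eval_mul, ha.eq_zero, hb.eq_zero] at h
  linarith

lemma polyIntegral_iterate_derivative_mul {a b : ℝ} {n : ℕ} {f : ℝ[X]}
    (ha : ∀ k < n, (derivative^[k] f).IsRoot a) (hb : ∀ k < n, (derivative^[k] f).IsRoot b)
    (g : ℝ[X]) :
    polyIntegral a b (derivative^[n] f * g)
      = (-1) ^ n * polyIntegral a b (f * derivative^[n] g) := by
  induction n generalizing g with
  | zero => simp
  | succ n ih =>
    rw [Function.iterate_succ_apply', polyIntegral_derivative_mul (ha n n.lt_succ_self)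
      (hb n n.lt_succ_self), ih (fun k hk => ha k (by omega)) (fun k hk => hb k (by omega)),
      Function.iterate_succ_apply]
    ring

noncomputable def shiftedLegendreReal : Polynomial.Sequence ℝ where
  elems' n := (shiftedLegendre n).map (Int.castRingHom ℝ)
  degree_eq' n := by
    rw [degree_map_eq_of_injective (RingHom.injective_int _), degree_shiftedLegendre]

namespace shiftedLegendreReal

local notation "𝐏" => shiftedLegendreReal

lemma apply (n : ℕ) : 𝐏 n = (shiftedLegendre n).map (Int.castRingHom ℝ) := rfl

lemma coeff (n k : ℕ) : (𝐏 n).coeff k = (-1) ^ k * n.choose k * (n + k).choose n := by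
  simp [apply, coeff_shiftedLegendre]

lemma factorial_mul_eq (n : ℕ) :
    (n.factorial : ℝ[X]) * 𝐏 n = derivative^[n] (X ^ n * (1 - X) ^ n) := by
  have h := congrArg (map (Int.castRingHom ℝ)) (factorial_mul_shiftedLegendre_eq n)
  simpa [apply, ← iterate_derivative_map] using h

lemma neg_one_pow_mul_comp_one_sub_X (n : ℕ) : (-1) ^ n * (𝐏 n).comp (1 - X) = 𝐏 n := by
  have h := congrArg (map (Int.castRingHom ℝ)) (neg_one_pow_mul_shiftedLegendre_comp_one_sub_X_eq n)
  simpa [apply, map_comp] using h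

lemma eval_zero (n : ℕ) : (𝐏 n).eval 0 = 1 := by
  simp [← coeff_zero_eq_eval_zero, coeff]

lemma derivative_eval_zero (n : ℕ) : (derivative (𝐏 n)).eval 0 = -(n * (n + 1)) := by
  simp [← coeff_zero_eq_eval_zero, coeff_derivative, coeff]

lemma eval_one (n : ℕ) : (𝐏 n).eval 1 = (-1) ^ n := by
  have h := congrArg (eval 1) (neg_one_pow_mul_comp_one_sub_X n)
  simpa [eval_zero] using h.symm

lemma derivative_eval_one (n : ℕ) : (derivative (𝐏 n)).eval 1 = (-1) ^ n * (n * (n + 1)) := by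
  have h := congrArg (fun q => (derivative q).eval 1) (neg_one_pow_mul_comp_one_sub_X n)
  simp only [derivative_mul, derivative_pow, map_natCast, derivative_neg, derivative_one, neg_zero,
    mul_zero, zero_mul, derivative_comp, derivative_sub, derivative_X, zero_sub, neg_mul, one_mul,
    mul_neg, zero_add, eval_neg, eval_mul, eval_pow, Polynomial.eval_one, eval_comp, eval_sub,
    eval_X, sub_self, derivative_eval_zero, neg_neg] at h
  linear_combination -h

lemma polyIntegral_mul_eq_zero {n : ℕ} {q : ℝ[X]} (hq : q.degree < n) :
    polyIntegral 0 1 (𝐏 n * q) = 0 := by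
  have h0 : (X - C 0) ^ n ∣ (X ^ n * (1 - X) ^ n : ℝ[X]) := by simp
  have h1 : (X - C 1) ^ n ∣ (X ^ n * (1 - X) ^ n : ℝ[X]) :=
    (pow_dvd_pow_of_dvd ⟨-1, by simp⟩ n).mul_left _
  have h := polyIntegral_iterate_derivative_mul
    (fun k hk => isRoot_iterate_derivative_of_pow_dvd h0 hk)
    (fun k hk => isRoot_iterate_derivative_of_pow_dvd h1 hk) q
  rw [← factorial_mul_eq, iterate_derivative_eq_zero_of_degree_lt hq, mul_zero, map_zero, mul_zero,
    mul_assoc, ← nsmul_eq_mul, map_nsmul] at h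
  exact (smul_eq_zero.mp h).resolve_left n.factorial_ne_zero

lemma polyIntegral_mul_of_ne {m n : ℕ} (h : m ≠ n) : polyIntegral 0 1 (𝐏 m * 𝐏 n) = 0 := by
  rcases h.lt_or_gt with h | h
  · rw [mul_comm]
    exact polyIntegral_mul_eq_zero (by rw [Sequence.degree_eq]; exact_mod_cast h)
  · exact polyIntegral_mul_eq_zero (by rw [Sequence.degree_eq]; exact_mod_cast h)

lemma polyIntegral_mul_self (n : ℕ) : polyIntegral 0 1 (𝐏 n * 𝐏 n) = 1 / (2 * n + 1) := by
  have horth := polyIntegral_mul_eq_zero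
    (degree_X_mul_derivative_sub_natCast_mul_lt (𝐏.natDegree_eq n).le)
  have hftc := polyIntegral_derivative 0 1 (X * 𝐏 n * 𝐏 n)
  have hsplit : derivative (X * 𝐏 n * 𝐏 n)
      = (2 * n + 1 : ℝ) • (𝐏 n * 𝐏 n)
        + (2 : ℝ) • (𝐏 n * (X * derivative (𝐏 n) - (n : ℝ[X]) * 𝐏 n)) := by
    simp only [derivative_mul, derivative_X, smul_eq_C_mul]
    simp only [map_add, map_mul, map_ofNat, map_natCast, map_one]
    ring
  rw [hsplit, map_add, map_smul, map_smul, horth] at hftc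
  simp only [smul_eq_mul, mul_zero, add_zero, eval_mul, eval_X, eval_one, one_mul, zero_mul,
    sub_zero, ← mul_pow, neg_one_mul, neg_neg, one_pow] at hftc
  rw [eq_div_iff (by positivity), mul_comm, hftc]

lemma polyIntegral_derivative_mul_self (n : ℕ) :
    polyIntegral 0 1 (derivative (𝐏 n) * derivative (𝐏 n)) = 2 * n * (n + 1) := by
  have horth := polyIntegral_mul_eq_zero (n := n) (q := derivative (derivative (𝐏 n)))
    (degree_derivative_le.trans_lt ((degree_derivative_lt (𝐏.ne_zero n)).trans_eq (𝐏.degree_eq n)))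
  have hftc := polyIntegral_derivative 0 1 (𝐏 n * derivative (𝐏 n))
  rw [derivative_mul, map_add, horth, add_zero, eval_mul, eval_mul, eval_one, eval_zero,
    derivative_eval_one, derivative_eval_zero] at hftc
  have hsq : ((-1 : ℝ) ^ n) * (-1) ^ n = 1 := by rw [← mul_pow]; norm_num
  rw [hftc]
  linear_combination (n * (n + 1) : ℝ) * hsq

lemma polyIntegral_sum_smul_sq (s : Finset ℕ) (c : ℕ → ℝ) :
    polyIntegral 0 1 ((∑ n ∈ s, c n • 𝐏 n) ^ 2) = ∑ n ∈ s, c n ^ 2 / (2 * n + 1) := by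
  rw [sq, sum_mul_sum, map_sum]
  refine sum_congr rfl fun m hm => ?_
  rw [map_sum, sum_eq_single m]
  · rw [smul_mul_smul_comm, map_smul, polyIntegral_mul_self, smul_eq_mul]
    ring
  · intro n _ hnm
    rw [smul_mul_smul_comm, map_smul, polyIntegral_mul_of_ne hnm.symm, smul_zero]
  · exact fun h => absurd hm h

lemma polyIntegral_derivative_sum_smul_sq_le (s : Finset ℕ) (c : ℕ → ℝ) :
    polyIntegral 0 1 (derivative (∑ n ∈ s, c n • 𝐏 n) ^ 2)
      ≤ (∑ n ∈ s, (2 * n + 1) * (2 * n * (n + 1) : ℝ))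
        * polyIntegral 0 1 ((∑ n ∈ s, c n • 𝐏 n) ^ 2) := by
  set g : ℝ[X] := ∑ n ∈ s, (2 * n + 1 : ℝ) • (derivative (𝐏 n) * derivative (𝐏 n))
  have hpt : ∀ x, (derivative (∑ n ∈ s, c n • 𝐏 n) ^ 2).eval x
      ≤ (polyIntegral 0 1 ((∑ n ∈ s, c n • 𝐏 n) ^ 2) • g).eval x := by
    intro x
    rw [polyIntegral_sum_smul_sq]
    simp only [g, eval_pow, derivative_sum, derivative_smul, eval_finsetSum, eval_smul,
      smul_eq_mul, eval_mul]
    refine sum_sq_le_sum_mul_sum_of_sq_le_mul s (fun n _ => by positivity)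
      (fun n _ => mul_nonneg (by positivity) (mul_self_nonneg _)) fun n _ => le_of_eq ?_
    field_simp
  calc _ ≤ polyIntegral 0 1 (polyIntegral 0 1 ((∑ n ∈ s, c n • 𝐏 n) ^ 2) • g) :=
        polyIntegral_mono zero_le_one fun x _ => hpt x
    _ = _ := by
        simp only [g, map_smul, map_sum, polyIntegral_derivative_mul_self, smul_eq_mul]
        ring

end shiftedLegendreReal

lemma polyIntegral_derivative_sq_le_of_natDegree_le {p : ℕ} {w : ℝ[X]} (hw : w.natDegree ≤ p) :
    polyIntegral 0 1 (derivative w ^ 2) ≤ p * (p + 1) ^ 2 * (p + 2) * polyIntegral 0 1 (w ^ 2) := by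
  have hsum (q : ℕ) : ∑ n ∈ range (q + 1), (2 * n + 1) * (2 * n * (n + 1) : ℝ)
      = q * (q + 1) ^ 2 * (q + 2) := by
    induction q with
    | zero => simp
    | succ q ih => rw [sum_range_succ, ih]; push_cast; ring
  obtain ⟨c, rfl⟩ := shiftedLegendreReal.exists_eq_sum_smul hw
  simpa [hsum] using shiftedLegendreReal.polyIntegral_derivative_sum_smul_sq_le (range (p + 1)) c

/-- Markov-type inverse inequality in `L²`: for every polynomial `w` of degree at most
`p` on `[0,1]`, `‖w'‖_{L²([0,1])} ≤ C p² ‖w‖_{L²([0,1])}` with an absolute constant `C`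
independent of `p` and `w`. -/
theorem markov_inverse_inequality_L2 :
    ∃ C > 0, ∀ (p : ℕ) (w : Polynomial ℝ), w.natDegree ≤ p →
      Real.sqrt (∫ x in (0:ℝ)..1, (w.derivative.eval x) ^ 2) ≤
        C * (p : ℝ) ^ 2 * Real.sqrt (∫ x in (0:ℝ)..1, (w.eval x) ^ 2) := by
  refine ⟨4, by norm_num, fun p w hw => ?_⟩
  have hp : (p : ℝ) * (p + 1) ^ 2 * (p + 2) ≤ (4 * p ^ 2) ^ 2 := by
    rcases p.eq_zero_or_pos with rfl | hp
    · simp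
    · have hp1 : (1 : ℝ) ≤ p := by exact_mod_cast hp
      calc (p : ℝ) * (p + 1) ^ 2 * (p + 2) ≤ p * (2 * p) ^ 2 * (3 * p) := by gcongr <;> linarith
        _ ≤ (4 * (p : ℝ) ^ 2) ^ 2 := by nlinarith [pow_nonneg (Nat.cast_nonneg (α := ℝ) p) 4]
  have hw2 : 0 ≤ ∫ x in (0:ℝ)..1, (w.eval x) ^ 2 :=
    intervalIntegral.integral_nonneg zero_le_one fun x _ => sq_nonneg _
  have key := polyIntegral_derivative_sq_le_of_natDegree_le hw
  simp only [polyIntegral_apply, eval_pow] at key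
  rw [← Real.sqrt_sq (by positivity : 0 ≤ 4 * (p : ℝ) ^ 2), ← Real.sqrt_mul (sq_nonneg _)]
  exact Real.sqrt_le_sqrt (key.trans (mul_le_mul_of_nonneg_right hp hw2))
end

section
/- For any point v on the boundary of a star-shaped region with center at the origin, a polynomial v of degree ≤ p satisfies the pointwise bound v(r)² ≤ C·p²·∫₀¹ v(s·r)² s ds for each fixed direction r, where C is an absolute constant. Specifically: for any one-variable polynomial q of degree ≤ p, q(1)² ≤ C·p²·∫₀¹ q(s)² s ds. -/
/-!
The constant comes from the reproducing kernel of `q ↦ q(0)` on polynomials of degree `≤ n`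
in `L²(0, 1)`. Mathlib's shifted Legendre polynomials satisfy `Pₖ(0) = 1`, `Pₖ(1) = (-1)ᵏ`, and,
by Rodrigues' formula and repeated integration by parts, are orthogonal to all polynomials of
degree `< k`. Hence `H = (Pₙ + Pₙ₊₁) / 2` has `H(0) = 1`, `H(1) = 0` and is orthogonal to degree
`< n`, so one integration by parts shows that `G = -H'` satisfies `∫₀¹ q G = q(0)`; in particular
`∫₀¹ G² = G(0) = (n + 1)²`, and Cauchy–Schwarz gives `q(0)² ≤ (n + 1)² ∫₀¹ q²`. Reflecting
`x ↦ 1 - x` moves this to the endpoint `1`, and applying it to `s q(s)`, using `s² ≤ s` on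
`[0, 1]`, yields the weighted bound with constant `(p + 2)² ≤ 9 p²`.
-/

open MeasureTheory Polynomial

theorem sq_intervalIntegral_mul_le {f g : ℝ → ℝ} {a b : ℝ} (hab : a ≤ b)
    (hf : Continuous f) (hg : Continuous g) :
    (∫ x in a..b, f x * g x) ^ 2 ≤ (∫ x in a..b, f x ^ 2) * ∫ x in a..b, g x ^ 2 := by
  have hfg : IntervalIntegrable (fun x => f x * g x) volume a b :=
    (hf.mul hg).intervalIntegrable a b
  have hff : IntervalIntegrable (fun x => f x ^ 2) volume a b := (hf.pow 2).intervalIntegrable a b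
  have hgg : IntervalIntegrable (fun x => g x ^ 2) volume a b := (hg.pow 2).intervalIntegrable a b
  have hquad : ∀ t : ℝ, 0 ≤ (∫ x in a..b, g x ^ 2) * (t * t) + (-2 * ∫ x in a..b, f x * g x) * t
      + ∫ x in a..b, f x ^ 2 := by
    intro t
    have hexp : ∫ x in a..b, (f x - t * g x) ^ 2 =
        (∫ x in a..b, g x ^ 2) * (t * t) + (-2 * ∫ x in a..b, f x * g x) * t
          + ∫ x in a..b, f x ^ 2 := by
      have : (fun x => (f x - t * g x) ^ 2) =
          fun x => t ^ 2 * g x ^ 2 + (-2 * t) * (f x * g x) + f x ^ 2 := by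
        ext x; ring
      rw [this, intervalIntegral.integral_add ((hgg.const_mul _).add (hfg.const_mul _)) hff,
        intervalIntegral.integral_add (hgg.const_mul _) (hfg.const_mul _),
        intervalIntegral.integral_const_mul, intervalIntegral.integral_const_mul]
      ring
    rw [← hexp]
    exact intervalIntegral.integral_nonneg hab fun x _ => sq_nonneg _
  have := discrim_le_zero hquad
  rw [discrim] at this
  linarith

namespace Polynomial

theorem integral_eval_mul_eval_derivative (u v : ℝ[X]) (a b : ℝ) :
    ∫ x in a..b, u.eval x * (derivative v).eval x =
      u.eval b * v.eval b - u.eval a * v.eval a -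
        ∫ x in a..b, (derivative u).eval x * v.eval x :=
  intervalIntegral.integral_mul_deriv_eq_deriv_mul (fun x _ => u.hasDerivAt x)
    (fun x _ => v.hasDerivAt x)
    ((derivative u).continuous.intervalIntegrable a b)
    ((derivative v).continuous.intervalIntegrable a b)

theorem integral_eval_mul_eval_iterate_derivative (r f : ℝ[X]) {a b : ℝ} {k : ℕ}
    (ha : ∀ i < k, (derivative^[i] f).eval a = 0) (hb : ∀ i < k, (derivative^[i] f).eval b = 0) :
    ∫ x in a..b, r.eval x * (derivative^[k] f).eval x =
      (-1) ^ k * ∫ x in a..b, (derivative^[k] r).eval x * f.eval x := by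
  induction k generalizing r with
  | zero => simp
  | succ k ih =>
    rw [Function.iterate_succ_apply', integral_eval_mul_eval_derivative, ha k k.lt_succ_self,
      hb k k.lt_succ_self, ih (derivative r) (fun i hi => ha i (hi.trans k.lt_succ_self))
        (fun i hi => hb i (hi.trans k.lt_succ_self)), ← Function.iterate_succ_apply]
    ring

noncomputable def shiftedLegendreReal (n : ℕ) : ℝ[X] := (shiftedLegendre n).map (Int.castRingHom ℝ)

theorem natDegree_shiftedLegendreReal_le (n : ℕ) : (shiftedLegendreReal n).natDegree ≤ n :=
  natDegree_map_le.trans (natDegree_shiftedLegendre n).le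

theorem eval_shiftedLegendreReal (n : ℕ) (x : ℝ) :
    (shiftedLegendreReal n).eval x = aeval x (shiftedLegendre n) := by
  rw [aeval_def, eval₂_eq_eval_map]; rfl

theorem shiftedLegendreReal_eval_zero (n : ℕ) : (shiftedLegendreReal n).eval 0 = 1 := by
  simp [shiftedLegendreReal, ← coeff_zero_eq_eval_zero, coeff_shiftedLegendre]

theorem shiftedLegendreReal_eval_one (n : ℕ) : (shiftedLegendreReal n).eval 1 = (-1) ^ n := by
  rw [eval_shiftedLegendreReal, shiftedLegendre_eval_symm, sub_self, ← eval_shiftedLegendreReal,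
    shiftedLegendreReal_eval_zero, mul_one]

theorem derivative_shiftedLegendreReal_eval_zero (n : ℕ) :
    (derivative (shiftedLegendreReal n)).eval 0 = -(n * (n + 1)) := by
  simp [shiftedLegendreReal, ← coeff_zero_eq_eval_zero, coeff_derivative, coeff_shiftedLegendre]

theorem factorial_mul_shiftedLegendreReal (n : ℕ) :
    (n.factorial : ℝ[X]) * shiftedLegendreReal n = derivative^[n] (X ^ n * (1 - X) ^ n) := by
  have := congrArg (map (Int.castRingHom ℝ)) (factorial_mul_shiftedLegendre_eq n)
  simpa only [shiftedLegendreReal, Polynomial.map_mul, Polynomial.map_natCast,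
    ← iterate_derivative_map, Polynomial.map_pow, Polynomial.map_sub, Polynomial.map_one,
    map_X] using this

theorem eval_iterate_derivative_X_pow_mul_one_sub_X_pow_eq_zero {n i : ℕ} (hi : i < n) :
    (derivative^[i] (X ^ n * (1 - X) ^ n : ℝ[X])).eval 0 = 0 ∧
      (derivative^[i] (X ^ n * (1 - X) ^ n : ℝ[X])).eval 1 = 0 := by
  have hn : n - i ≠ 0 := by omega
  constructor
  · exact eval_eq_zero_of_dvd_of_eval_eq_zero
      (pow_sub_dvd_iterate_derivative_of_pow_dvd i (dvd_mul_right _ _)) (by simp [hn])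
  · exact eval_eq_zero_of_dvd_of_eval_eq_zero
      (pow_sub_dvd_iterate_derivative_of_pow_dvd i (dvd_mul_left _ _)) (by simp [hn])

theorem integral_eval_mul_eval_shiftedLegendreReal_eq_zero {r : ℝ[X]} {n : ℕ}
    (hr : r.degree < n) :
    ∫ x in (0 : ℝ)..1, r.eval x * (shiftedLegendreReal n).eval x = 0 := by
  have h := integral_eval_mul_eval_iterate_derivative r (X ^ n * (1 - X) ^ n)
    (fun i hi => (eval_iterate_derivative_X_pow_mul_one_sub_X_pow_eq_zero hi).1)
    (fun i hi => (eval_iterate_derivative_X_pow_mul_one_sub_X_pow_eq_zero hi).2)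
  simp only [← factorial_mul_shiftedLegendreReal, iterate_derivative_eq_zero_of_degree_lt hr,
    eval_mul, eval_natCast, eval_zero, zero_mul, intervalIntegral.integral_zero, mul_zero,
    mul_left_comm _ (n.factorial : ℝ), intervalIntegral.integral_const_mul] at h
  simpa [Nat.factorial_ne_zero] using h

noncomputable def shiftedLegendreAvg (n : ℕ) : ℝ[X] :=
  C (1 / 2) * (shiftedLegendreReal n + shiftedLegendreReal (n + 1))

theorem shiftedLegendreAvg_eval_zero (n : ℕ) : (shiftedLegendreAvg n).eval 0 = 1 := by
  simp [shiftedLegendreAvg, shiftedLegendreReal_eval_zero]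
  norm_num

theorem shiftedLegendreAvg_eval_one (n : ℕ) : (shiftedLegendreAvg n).eval 1 = 0 := by
  simp [shiftedLegendreAvg, shiftedLegendreReal_eval_one, pow_succ]

theorem integral_eval_mul_eval_shiftedLegendreAvg_eq_zero {r : ℝ[X]} {n : ℕ}
    (hr : r.degree < n) :
    ∫ x in (0 : ℝ)..1, r.eval x * (shiftedLegendreAvg n).eval x = 0 := by
  have hr' : r.degree < ↑(n + 1) := hr.trans (by exact_mod_cast n.lt_succ_self)
  simp only [shiftedLegendreAvg, eval_mul, eval_C, eval_add, mul_add, mul_left_comm _ (1 / 2 : ℝ)]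
  rw [intervalIntegral.integral_add, intervalIntegral.integral_const_mul,
    intervalIntegral.integral_const_mul, integral_eval_mul_eval_shiftedLegendreReal_eq_zero hr,
    integral_eval_mul_eval_shiftedLegendreReal_eq_zero hr']
  · ring
  all_goals exact Continuous.intervalIntegrable (by fun_prop) _ _

noncomputable def evalZeroKernel (n : ℕ) : ℝ[X] := -derivative (shiftedLegendreAvg n)

theorem natDegree_evalZeroKernel_le (n : ℕ) : (evalZeroKernel n).natDegree ≤ n := by
  have hH : (shiftedLegendreAvg n).natDegree ≤ n + 1 :=
    (natDegree_C_mul_le _ _).trans <| (natDegree_add_le _ _).trans <|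
      max_le ((natDegree_shiftedLegendreReal_le n).trans n.le_succ)
        (natDegree_shiftedLegendreReal_le (n + 1))
  rw [evalZeroKernel, natDegree_neg]
  exact (natDegree_derivative_le _).trans (by omega)

theorem evalZeroKernel_eval_zero (n : ℕ) : (evalZeroKernel n).eval 0 = ((n : ℝ) + 1) ^ 2 := by
  simp only [evalZeroKernel, shiftedLegendreAvg, derivative_C_mul, derivative_add, eval_neg,
    eval_mul, eval_C, eval_add, derivative_shiftedLegendreReal_eval_zero]
  push_cast
  ring

theorem integral_eval_mul_eval_evalZeroKernel {q : ℝ[X]} {n : ℕ} (hq : q.natDegree ≤ n) :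
    ∫ x in (0 : ℝ)..1, q.eval x * (evalZeroKernel n).eval x = q.eval 0 := by
  have hdq : (derivative q).degree < n := by
    rcases eq_or_ne q 0 with rfl | hq0
    · simp
    · exact (degree_derivative_lt hq0).trans_le (degree_le_of_natDegree_le hq)
  simp only [evalZeroKernel, eval_neg, mul_neg, intervalIntegral.integral_neg,
    integral_eval_mul_eval_derivative, shiftedLegendreAvg_eval_zero, shiftedLegendreAvg_eval_one,
    integral_eval_mul_eval_shiftedLegendreAvg_eq_zero hdq]
  ring

theorem sq_eval_zero_le_integral {q : ℝ[X]} {n : ℕ} (hq : q.natDegree ≤ n) :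
    q.eval 0 ^ 2 ≤ ((n : ℝ) + 1) ^ 2 * ∫ x in (0 : ℝ)..1, q.eval x ^ 2 := by
  have hK : ∫ x in (0 : ℝ)..1, (evalZeroKernel n).eval x ^ 2 = ((n : ℝ) + 1) ^ 2 := by
    simp only [sq, integral_eval_mul_eval_evalZeroKernel (natDegree_evalZeroKernel_le n)]
    rw [← sq, evalZeroKernel_eval_zero]
  calc q.eval 0 ^ 2
      = (∫ x in (0 : ℝ)..1, q.eval x * (evalZeroKernel n).eval x) ^ 2 := by
        rw [integral_eval_mul_eval_evalZeroKernel hq]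
    _ ≤ (∫ x in (0 : ℝ)..1, q.eval x ^ 2) * ∫ x in (0 : ℝ)..1, (evalZeroKernel n).eval x ^ 2 :=
        sq_intervalIntegral_mul_le zero_le_one q.continuous (evalZeroKernel n).continuous
    _ = ((n : ℝ) + 1) ^ 2 * ∫ x in (0 : ℝ)..1, q.eval x ^ 2 := by rw [hK, mul_comm]

theorem sq_eval_one_le_integral {q : ℝ[X]} {n : ℕ} (hq : q.natDegree ≤ n) :
    q.eval 1 ^ 2 ≤ ((n : ℝ) + 1) ^ 2 * ∫ x in (0 : ℝ)..1, q.eval x ^ 2 := by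
  have hdeg : (q.comp (1 - X)).natDegree ≤ n := by
    rw [natDegree_comp]
    exact (Nat.mul_le_mul hq (natDegree_sub_le _ _)).trans (by simp)
  have hint : ∫ x in (0 : ℝ)..1, q.eval (1 - x) ^ 2 = ∫ x in (0 : ℝ)..1, q.eval x ^ 2 := by
    rw [intervalIntegral.integral_comp_sub_left (fun x => q.eval x ^ 2)]
    norm_num
  simpa [hint] using sq_eval_zero_le_integral hdeg

theorem sq_eval_one_le_integral_sq_mul_id {q : ℝ[X]} {n : ℕ} (hq : q.natDegree ≤ n) :
    q.eval 1 ^ 2 ≤ ((n : ℝ) + 2) ^ 2 * ∫ s in (0 : ℝ)..1, q.eval s ^ 2 * s := by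
  have hXq : (X * q).natDegree ≤ n + 1 := natDegree_mul_le.trans (by rw [natDegree_X]; omega)
  have hweight : ∫ s in (0 : ℝ)..1, (X * q).eval s ^ 2 ≤ ∫ s in (0 : ℝ)..1, q.eval s ^ 2 * s := by
    refine intervalIntegral.integral_mono_on zero_le_one
      (Continuous.intervalIntegrable (by fun_prop) _ _)
      (Continuous.intervalIntegrable (by fun_prop) _ _) fun s ⟨hs0, hs1⟩ => ?_
    have : 0 ≤ q.eval s ^ 2 * s := by positivity
    simp only [eval_mul, eval_X]
    nlinarith
  calc q.eval 1 ^ 2 = (X * q).eval 1 ^ 2 := by simp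
    _ ≤ ((n : ℝ) + 2) ^ 2 * ∫ s in (0 : ℝ)..1, (X * q).eval s ^ 2 := by
        simpa [add_assoc, one_add_one_eq_two] using sq_eval_one_le_integral hXq
    _ ≤ ((n : ℝ) + 2) ^ 2 * ∫ s in (0 : ℝ)..1, q.eval s ^ 2 * s := by gcongr

end Polynomial

/-- Pointwise boundary bound from identity (3.5): for any one-variable polynomial `q` of
degree at most `p` (`p ≥ 1`), `q(1)² ≤ C p² ∫₀¹ q(s)² s ds` with an absolute constant
`C`. -/
theorem pointwise_boundary_bound :
    ∃ C > 0, ∀ (p : ℕ), 1 ≤ p → ∀ q : Polynomial ℝ, q.natDegree ≤ p →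
      (q.eval 1) ^ 2 ≤ C * (p : ℝ) ^ 2 * ∫ s in (0:ℝ)..1, (q.eval s) ^ 2 * s := by
  refine ⟨9, by norm_num, fun p hp q hq => (sq_eval_one_le_integral_sq_mul_id hq).trans ?_⟩
  have hp' : (1 : ℝ) ≤ p := by exact_mod_cast hp
  have hint : 0 ≤ ∫ s in (0 : ℝ)..1, q.eval s ^ 2 * s :=
    intervalIntegral.integral_nonneg zero_le_one fun s hs => by have := hs.1; positivity
  gcongr
  nlinarith
end
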